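/- Let n = 2m−1 with m ≥ 2 and j ∈ {1,…,m}. Then: (i) T_hᵀ·F_j = 0 for every h ∈ {1,…,n+1} with h < m−j+1; and (ii) T_{m−j+1}ᵀ·F_j = c(n−2)·q^{m−1}·(v(n)·I − J), where I is the identity matrix and J the all-ones matrix, both indexed by the points of F_q^{n+1}. -/

import Mathlib

open Matrix
def MaxFlagA (F : Type) [Field F] (n : ℕ) : Type :=
  {U : Fin (n + 2) → Submodule F (Fin (n + 1) → F) //
    Monotone U ∧ ∀ k : Fin (n + 2), Module.finrank F (U k) = (k : ℕ)}

instance (F : Type) [Field F] [Fintype F] (n : ℕ) : Finite (MaxFlagA F n) :=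
  Subtype.finite

noncomputable instance (F : Type) [Field F] [Fintype F] (n : ℕ) : Fintype (MaxFlagA F n) :=
  Fintype.ofFinite _

/-- The points of `F^(n+1)`: one-dimensional subspaces. -/
def PointA (F : Type) [Field F] (n : ℕ) : Type :=
  {X : Submodule F (Fin (n + 1) → F) // Module.finrank F X = 1}

instance (F : Type) [Field F] [Fintype F] (n : ℕ) : Finite (PointA F n) :=
  Subtype.finite

noncomputable instance (F : Type) [Field F] [Fintype F] (n : ℕ) : Fintype (PointA F n) :=
  Fintype.ofFinite _

noncomputable def flagMemA {F : Type} [Field F] {n : ℕ} (c : MaxFlagA F n) (k : ℕ) :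
    Submodule F (Fin (n + 1) → F) :=
  if h : k < n + 2 then c.1 ⟨k, h⟩ else ⊤

noncomputable def flagTypeA {F : Type} [Field F] {n : ℕ} (c : MaxFlagA F n)
    (X : Submodule F (Fin (n + 1) → F)) : ℕ :=
  sInf {k : ℕ | X ≤ flagMemA c k}

open Classical in
/-- `T_i`: the flag-by-point `{0,1}` matrix of the `type i` relation. -/
noncomputable def TmatA (F : Type) [Field F] [Fintype F] (n : ℕ) (i : ℕ) :
    Matrix (MaxFlagA F n) (PointA F n) ℚ :=
  fun c X => if flagTypeA c X.1 = i then 1 else 0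

/-- `F_j = q^j ∑_{i=m-j+1}^{m} T_i - ∑_{i=m+1}^{m+j} T_i`. -/
noncomputable def FmatA (F : Type) [Field F] [Fintype F] (n m j : ℕ) :
    Matrix (MaxFlagA F n) (PointA F n) ℚ :=
  (Fintype.card F : ℚ) ^ j • (∑ i ∈ Finset.Icc (m - j + 1) m, TmatA F n i) -
    ∑ i ∈ Finset.Icc (m + 1) (m + j), TmatA F n i

/-- `v(k) = (q^(k+1)-1)/(q-1)`. -/
noncomputable def vA (q : ℚ) (k : ℕ) : ℚ := (q ^ (k + 1) - 1) / (q - 1)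

/-- `c(k) = ∏_{i=1}^{k} v(i)`. -/
noncomputable def cA (q : ℚ) (k : ℕ) : ℚ :=
  ∏ i ∈ Finset.Icc 1 k, (q ^ (i + 1) - 1) / (q - 1)

/-!
The matrix `M = T_hᵀ F_j` is invariant under `GL(V)`, which acts 2-transitively on points, so
`M = α I + β J`. Its rows sum to zero because the rows of `F_j` do: a flag has exactly `q^(i-1)`
points of type `i`, and `q^j ∑_{i=m-j+1}^{m} q^(i-1) = ∑_{i=m+1}^{m+j} q^(i-1)`. Hence `M` is a
multiple of `v(n) I - J`, read off from the diagonal: `T_h` and `T_i` have disjoint supports for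
`h ≠ i`, so `M X X` is `q^j` times the number of flags of type `h` with respect to `X` when
`m-j+1 ≤ h ≤ m`, and `0` when `h < m-j+1`. Double counting gives that number as
`#flags · q^(h-1) / v(n)`, and `#flags = c(n)` by fibring the flags over their point `U_1`.
-/

open Module Submodule

section Points

variable {F V : Type*} [Field F] [AddCommGroup V] [Module F V]

theorem natCard_finrank_eq_one [Fintype F] {d : ℕ} (hd : finrank F V = d) :
    Nat.card {X : Submodule F V // finrank F X = 1} =
      ∑ i ∈ Finset.range d, Fintype.card F ^ i := by
  rw [← Nat.card_congr (Projectivization.equivSubmodule F V),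
    Projectivization.card_of_finrank F V hd, Nat.card_eq_fintype_card]

theorem natCard_finrank_eq_one_le [Fintype F] (W : Submodule F V) :
    Nat.card {X : Submodule F V // finrank F X = 1 ∧ X ≤ W} =
      ∑ i ∈ Finset.range (finrank F W), Fintype.card F ^ i := by
  rw [← natCard_finrank_eq_one (V := W) rfl]
  refine Nat.card_congr
    { toFun X := ⟨X.1.comap W.subtype,
        (LinearEquiv.finrank_eq (comapSubtypeEquivOfLe X.2.2)).trans X.2.1⟩
      invFun Z := ⟨Z.1.map W.subtype,
        (LinearEquiv.finrank_eq (equivMapOfInjective _ W.injective_subtype Z.1)).symm.trans Z.2,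
        map_subtype_le W Z.1⟩
      left_inv X := Subtype.ext <| by simpa [map_comap_subtype] using X.2.2
      right_inv Z := Subtype.ext <| comap_map_eq_of_injective W.injective_subtype Z.1 }

theorem Projectivization.submodule_linearEquiv_smul (g : V ≃ₗ[F] V) (D : Projectivization F V) :
    (g • D).submodule = D.submodule.map (g : V →ₗ[F] V) := by
  induction D using Projectivization.ind with
  | h v hv => simp [Submodule.map_span]

theorem exists_linearEquiv_map_eq_map_eq {X Y X' Y' : Submodule F V}
    (hX : finrank F X = 1) (hY : finrank F Y = 1) (hX' : finrank F X' = 1)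
    (hY' : finrank F Y' = 1) (hXY : X ≠ Y) (hXY' : X' ≠ Y') :
    ∃ g : V ≃ₗ[F] V, X.map (g : V →ₗ[F] V) = X' ∧ Y.map (g : V →ₗ[F] V) = Y' := by
  open Projectivization in
  obtain ⟨g, hgX, hgY⟩ :=
    (MulAction.is_two_pretransitive_iff (G := V ≃ₗ[F] V)).mp inferInstance
    (mt (congrArg Projectivization.submodule) (by simpa using hXY) : mk'' X hX ≠ mk'' Y hY)
    (mt (congrArg Projectivization.submodule) (by simpa using hXY') : mk'' X' hX' ≠ mk'' Y' hY')
  refine ⟨g, ?_, ?_⟩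
  · simpa [submodule_linearEquiv_smul] using congrArg Projectivization.submodule hgX
  · simpa [submodule_linearEquiv_smul] using congrArg Projectivization.submodule hgY

end Points

section Flags

variable {F : Type} [Field F]

-- `MaxFlagA F n` is `CompleteFlag F (Fin (n + 1) → F) (n + 1)` by definition; the generality in
-- `V` is what lets the count of flags induct through quotients.
def CompleteFlag (F V : Type) [Field F] [AddCommGroup V] [Module F V] (d : ℕ) : Type :=
  {U : Fin (d + 1) → Submodule F V // Monotone U ∧ ∀ k : Fin (d + 1), finrank F (U k) = k}

instance (V : Type) [AddCommGroup V] [Module F V] [Finite V] (d : ℕ) :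
    Finite (CompleteFlag F V d) :=
  Subtype.finite

section Quotient

variable {V : Type} [AddCommGroup V] [Module F V] [FiniteDimensional F V]

theorem finrank_map_mkQ_add_finrank {X W : Submodule F V} (h : X ≤ W) :
    finrank F (W.map X.mkQ) + finrank F X = finrank F W := by
  have h1 := LinearMap.finrank_range_add_finrank_ker (X.mkQ.domRestrict W)
  rw [LinearMap.range_domRestrict, LinearMap.ker_domRestrict, ker_mkQ] at h1
  rw [← h1, LinearEquiv.finrank_eq (comapSubtypeEquivOfLe h)]

theorem finrank_comap_mkQ (X : Submodule F V) (W : Submodule F (V ⧸ X)) :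
    finrank F (W.comap X.mkQ) = finrank F W + finrank F X := by
  have h := finrank_map_mkQ_add_finrank (le_comap_mkQ X W)
  rw [map_comap_eq_of_surjective X.mkQ_surjective] at h
  exact h.symm

end Quotient

theorem CompleteFlag.le_apply_succ {V : Type} [AddCommGroup V] [Module F V] {d : ℕ}
    (c : CompleteFlag F V (d + 1)) (k : Fin (d + 1)) : c.1 1 ≤ c.1 k.succ :=
  c.2.1 (Fin.succ_pos k)

section Count

variable {V : Type} [AddCommGroup V] [Module F V] [FiniteDimensional F V]

theorem CompleteFlag.apply_zero {d : ℕ} (c : CompleteFlag F V d) : c.1 0 = ⊥ :=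
  Submodule.finrank_eq_zero.mp (c.2.2 0)

noncomputable def CompleteFlag.fiberEquivQuotient {d : ℕ} (X : Submodule F V)
    (hX : finrank F X = 1) :
    {c : CompleteFlag F V (d + 1) // c.1 1 = X} ≃ CompleteFlag F (V ⧸ X) d where
  toFun c := ⟨fun k => (c.1.1 k.succ).map X.mkQ,
    fun a b hab => map_mono (c.1.2.1 (Fin.succ_le_succ_iff.mpr hab)),
    fun k => by
      have h := finrank_map_mkQ_add_finrank (c.2 ▸ c.1.le_apply_succ k)
      rw [hX, c.1.2.2 k.succ, Fin.val_succ] at h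
      exact Nat.add_right_cancel h⟩
  invFun W := ⟨⟨Fin.cases (motive := fun _ => Submodule F V) ⊥
      fun l => (W.1 l).comap X.mkQ, by
      refine ⟨fun a b hab => ?_, fun k => ?_⟩
      · cases a using Fin.cases with
        | zero => exact bot_le
        | succ a =>
          cases b using Fin.cases with
          | zero => exact absurd hab (Fin.succ_pos a).not_ge
          | succ b => exact comap_mono (W.2.1 (Fin.succ_le_succ_iff.mp hab))
      · cases k using Fin.cases with
        | zero => exact finrank_bot F V
        | succ k =>
          show finrank F ((W.1 k).comap X.mkQ) = k + 1
          rw [finrank_comap_mkQ, hX, W.2.2 k]⟩, by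
      show (W.1 0).comap X.mkQ = X
      rw [W.apply_zero, comap_bot, ker_mkQ]⟩
  left_inv c := by
    refine Subtype.ext (Subtype.ext (funext fun k => ?_))
    cases k using Fin.cases with
    | zero => exact c.1.apply_zero.symm
    | succ k => simpa [comap_map_mkQ, ← c.2] using c.1.le_apply_succ k
  right_inv W := Subtype.ext <| funext fun k =>
    show ((W.1 k).comap X.mkQ).map X.mkQ = W.1 k from
      map_comap_eq_of_surjective X.mkQ_surjective (W.1 k)

theorem CompleteFlag.natCard_eq [Fintype F] {d : ℕ} (hd : finrank F V = d) :
    Nat.card (CompleteFlag F V d) =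
      ∏ k ∈ Finset.range d, ∑ i ∈ Finset.range (k + 1), Fintype.card F ^ i := by
  induction d generalizing V with
  | zero =>
    rw [Finset.prod_range_zero, Nat.card_eq_one_iff_exists]
    refine ⟨⟨fun _ => ⊥, monotone_const, fun k => by simp [Fin.fin_one_eq_zero k]⟩,
      fun c => Subtype.ext (funext fun k => ?_)⟩
    rw [Fin.fin_one_eq_zero k]
    exact c.apply_zero
  | succ d ih =>
    let π (c : CompleteFlag F V (d + 1)) : {X : Submodule F V // finrank F X = 1} :=
      ⟨c.1 1, by simpa using c.2.2 1⟩
    have hfiber (X : {X : Submodule F V // finrank F X = 1}) :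
        Nat.card {c // π c = X} =
          ∏ k ∈ Finset.range d, ∑ i ∈ Finset.range (k + 1), Fintype.card F ^ i := by
      rw [Nat.card_congr ((Equiv.subtypeEquivRight fun c => Subtype.ext_iff).trans
        (CompleteFlag.fiberEquivQuotient X.1 X.2))]
      apply ih
      have := X.1.finrank_quotient_add_finrank
      rw [hd, X.2] at this
      omega
    have : Finite V := Module.finite_of_finite F
    have := Fintype.ofFinite {X : Submodule F V // finrank F X = 1}
    rw [← Nat.card_congr (Equiv.sigmaFiberEquiv π), Nat.card_sigma,
      Finset.sum_congr rfl fun X _ => hfiber X, Finset.sum_const, Finset.card_univ,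
      ← Nat.card_eq_fintype_card, natCard_finrank_eq_one hd, smul_eq_mul,
      Finset.prod_range_succ, mul_comm]

end Count

end Flags

section FlagType

variable {F : Type} [Field F] {n : ℕ} (c : MaxFlagA F n)

theorem finrank_flagMemA {k : ℕ} (hk : k ≤ n + 1) : finrank F (flagMemA c k) = k := by
  rw [flagMemA, dif_pos (by omega)]
  exact c.2.2 ⟨k, by omega⟩

theorem flagMemA_mono : Monotone (flagMemA c) := by
  intro a b hab
  unfold flagMemA
  split_ifs <;> first | exact le_top | omega | exact c.2.1 (Fin.mk_le_mk.mpr hab)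

theorem flagMemA_zero : flagMemA c 0 = ⊥ :=
  Submodule.finrank_eq_zero.mp (finrank_flagMemA c (Nat.zero_le _))

theorem flagMemA_last : flagMemA c (n + 1) = ⊤ :=
  Submodule.eq_top_of_finrank_eq <| by rw [finrank_flagMemA c le_rfl, finrank_fin_fun]

theorem le_flagMemA_flagTypeA (X : Submodule F (Fin (n + 1) → F)) :
    X ≤ flagMemA c (flagTypeA c X) :=
  Nat.sInf_mem (s := {k | X ≤ flagMemA c k})
    ⟨n + 1, show X ≤ flagMemA c (n + 1) from flagMemA_last c ▸ le_top⟩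

theorem flagTypeA_le_of_le {X : Submodule F (Fin (n + 1) → F)} {k : ℕ}
    (h : X ≤ flagMemA c k) : flagTypeA c X ≤ k :=
  Nat.sInf_le h

theorem flagTypeA_eq_succ_iff {X : Submodule F (Fin (n + 1) → F)} (hX : finrank F X = 1)
    (k : ℕ) : flagTypeA c X = k + 1 ↔ X ≤ flagMemA c (k + 1) ∧ ¬X ≤ flagMemA c k := by
  have hpos : flagTypeA c X ≠ 0 := fun h0 => by
    have := le_flagMemA_flagTypeA c X
    rw [h0, flagMemA_zero, le_bot_iff] at this
    rw [this, finrank_bot] at hX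
    exact zero_ne_one hX
  constructor
  · intro h
    refine ⟨h ▸ le_flagMemA_flagTypeA c X, fun hk => ?_⟩
    have := flagTypeA_le_of_le c hk
    omega
  · rintro ⟨h1, h2⟩
    refine le_antisymm (flagTypeA_le_of_le c h1) (Nat.succ_le_of_lt ?_)
    by_contra! hle
    exact h2 ((le_flagMemA_flagTypeA c X).trans (flagMemA_mono c hle))

theorem natCard_flagTypeA_eq [Fintype F] {i : ℕ} (hi1 : 1 ≤ i) (hi2 : i ≤ n + 1) :
    Nat.card {Y : PointA F n // flagTypeA c Y.1 = i} = Fintype.card F ^ (i - 1) := by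
  obtain ⟨k, rfl⟩ : ∃ k, i = k + 1 := ⟨i - 1, by omega⟩
  let S (l : ℕ) : Set (Submodule F (Fin (n + 1) → F)) :=
    {X | finrank F X = 1 ∧ X ≤ flagMemA c l}
  have hS {l : ℕ} (hl : l ≤ n + 1) :
      (S l).ncard = ∑ t ∈ Finset.range l, Fintype.card F ^ t := by
    have h := natCard_finrank_eq_one_le (F := F) (flagMemA c l)
    rw [finrank_flagMemA c hl] at h
    rw [← Nat.card_coe_set_eq, ← h]
    rfl
  have e : {Y : PointA F n // flagTypeA c Y.1 = k + 1} ≃ ↥(S (k + 1) \ S k) :=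
    (Equiv.subtypeSubtypeEquivSubtypeInter (fun X : Submodule F (Fin (n + 1) → F) =>
      finrank F X = 1) (fun X => flagTypeA c X = k + 1)).trans <|
    Equiv.subtypeEquivRight fun X => by
      simp only [S, Set.mem_sdiff, Set.mem_ofPred_eq]
      constructor
      · rintro ⟨hX, ht⟩
        have := (flagTypeA_eq_succ_iff c hX k).mp ht
        exact ⟨⟨hX, this.1⟩, fun h => this.2 h.2⟩
      · rintro ⟨⟨hX, h1⟩, h2⟩
        exact ⟨hX, (flagTypeA_eq_succ_iff c hX k).mpr ⟨h1, fun h => h2 ⟨hX, h⟩⟩⟩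
  have hsplit := Set.ncard_sdiff_add_ncard_of_subset (s := S k) (t := S (k + 1))
    (fun X hX => ⟨hX.1, hX.2.trans (flagMemA_mono c k.le_succ)⟩) (Set.toFinite _)
  rw [hS hi2, hS (by omega), Finset.sum_range_succ] at hsplit
  rw [Nat.card_congr e, Nat.card_coe_set_eq, Nat.add_sub_cancel]
  omega

end FlagType

section Equivariance

variable {F : Type} [Field F]

def CompleteFlag.map {V : Type} [AddCommGroup V] [Module F V] {d : ℕ} (g : V ≃ₗ[F] V)
    (c : CompleteFlag F V d) : CompleteFlag F V d :=
  ⟨fun k => (c.1 k).map (g : V →ₗ[F] V), fun _ _ hab => map_mono (c.2.1 hab),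
    fun k => (LinearEquiv.finrank_map_eq g _).trans (c.2.2 k)⟩

def CompleteFlag.mapEquiv {V : Type} [AddCommGroup V] [Module F V] {d : ℕ} (g : V ≃ₗ[F] V) :
    CompleteFlag F V d ≃ CompleteFlag F V d where
  toFun := CompleteFlag.map g
  invFun := CompleteFlag.map g.symm
  left_inv c := Subtype.ext <| funext fun k => by simp [CompleteFlag.map, ← map_comp]
  right_inv c := Subtype.ext <| funext fun k => by simp [CompleteFlag.map, ← map_comp]

variable {n : ℕ} (g : (Fin (n + 1) → F) ≃ₗ[F] (Fin (n + 1) → F))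

def MaxFlagA.mapEquiv : MaxFlagA F n ≃ MaxFlagA F n :=
  CompleteFlag.mapEquiv g

def PointA.map (X : PointA F n) : PointA F n :=
  ⟨X.1.map (g : (Fin (n + 1) → F) →ₗ[F] (Fin (n + 1) → F)),
    (LinearEquiv.finrank_map_eq g _).trans X.2⟩

theorem flagMemA_mapEquiv (c : MaxFlagA F n) (k : ℕ) :
    flagMemA (MaxFlagA.mapEquiv g c) k =
      (flagMemA c k).map (g : (Fin (n + 1) → F) →ₗ[F] (Fin (n + 1) → F)) := by
  unfold flagMemA
  split_ifs
  · rfl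
  · rw [Submodule.map_top, LinearEquiv.range]

theorem flagTypeA_mapEquiv (c : MaxFlagA F n) (X : PointA F n) :
    flagTypeA (MaxFlagA.mapEquiv g c) (PointA.map g X).1 = flagTypeA c X.1 := by
  unfold flagTypeA
  simp_rw [PointA.map, flagMemA_mapEquiv, map_le_map_iff_of_injective g.injective]

theorem TmatA_submatrix_mapEquiv [Fintype F] (i : ℕ) :
    (TmatA F n i).submatrix (MaxFlagA.mapEquiv g) (PointA.map g) = TmatA F n i := by
  ext c X
  simp only [TmatA, submatrix_apply, flagTypeA_mapEquiv]

theorem FmatA_submatrix_mapEquiv [Fintype F] (m j : ℕ) :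
    (FmatA F n m j).submatrix (MaxFlagA.mapEquiv g) (PointA.map g) = FmatA F n m j := by
  ext c X
  simp only [FmatA, submatrix_apply, Matrix.sub_apply, Matrix.smul_apply, Matrix.sum_apply]
  simp only [← submatrix_apply, TmatA_submatrix_mapEquiv]

end Equivariance

theorem Matrix.transpose_mul_submatrix_eq_self {ι κ R : Type*} [Fintype ι] [Mul R]
    [AddCommMonoid R] {A B : Matrix ι κ R} (σ : ι ≃ ι) (τ : κ → κ)
    (hA : A.submatrix σ τ = A) (hB : B.submatrix σ τ = B) :
    (Aᵀ * B).submatrix τ τ = Aᵀ * B := by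
  rw [← submatrix_mul_equiv Aᵀ B τ σ τ, ← transpose_submatrix, hA, hB]

theorem Matrix.card_sub_one_smul_eq_of_mulVec_eq_zero {ι R : Type*} [Fintype ι] [DecidableEq ι]
    [CommRing R] {M : Matrix ι ι R} {d : R} (hdiag : ∀ X, M X X = d)
    (hoff : ∀ X Y Y', Y ≠ X → Y' ≠ X → M X Y = M X Y') (hrow : M *ᵥ (fun _ => 1) = 0) :
    ((Fintype.card ι : R) - 1) • M =
      d • ((Fintype.card ι : R) • (1 : Matrix ι ι R) - of fun _ _ => 1) := by
  ext X Y
  rcases eq_or_ne Y X with rfl | hYX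
  · simp [hdiag]
    ring
  · have hrowX : ∑ Y', M X Y' = 0 := by simpa [mulVec, dotProduct] using congrFun hrow X
    have hentry (Y' : ι) : M X Y' = M X Y + if Y' = X then d - M X Y else 0 := by
      split_ifs with h
      · rw [h, hdiag]
        ring
      · rw [hoff X Y' Y h hYX, add_zero]
    rw [Finset.sum_congr rfl fun Y' _ => hentry Y', Finset.sum_add_distrib, Finset.sum_const,
      Finset.sum_ite_eq', if_pos (Finset.mem_univ X), Finset.card_univ, nsmul_eq_mul] at hrowX
    simp [one_apply_ne' hYX]
    linear_combination hrowX

theorem pow_mul_sum_Icc_pow_sub_one {R : Type*} [Semiring R] (x : R) {m j : ℕ} (hj : j ≤ m) :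
    x ^ j * ∑ i ∈ Finset.Icc (m - j + 1) m, x ^ (i - 1) =
      ∑ i ∈ Finset.Icc (m + 1) (m + j), x ^ (i - 1) := by
  have hIcc :
      Finset.Icc (m + 1) (m + j) = (Finset.Icc (m - j + 1) m).map (addRightEmbedding j) := by
    rw [Finset.map_add_right_Icc]
    congr 1
    omega
  rw [hIcc, Finset.sum_map, Finset.mul_sum]
  refine Finset.sum_congr rfl fun i hi => ?_
  rw [Finset.mem_Icc] at hi
  rw [addRightEmbedding_apply, ← pow_add]
  congr 1
  omega

section Incidence

variable {F : Type} [Field F] [Fintype F] {n : ℕ}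

theorem TmatA_mulVec_one {i : ℕ} (hi1 : 1 ≤ i) (hi2 : i ≤ n + 1) :
    TmatA F n i *ᵥ (fun _ => 1) = fun _ => (Fintype.card F : ℚ) ^ (i - 1) := by
  funext c
  simp only [mulVec, dotProduct, TmatA, mul_one, Finset.sum_boole]
  rw [← Fintype.card_subtype, ← Nat.card_eq_fintype_card, natCard_flagTypeA_eq c hi1 hi2]
  push_cast
  rfl

theorem FmatA_mulVec_one {m j : ℕ} (hj : j ≤ m) (hmj : m + j ≤ n + 1) :
    FmatA F n m j *ᵥ (fun _ => 1) = 0 := by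
  have hrow {s : Finset ℕ} (hs : ∀ i ∈ s, 1 ≤ i ∧ i ≤ n + 1) :
      (∑ i ∈ s, TmatA F n i) *ᵥ (fun _ => 1) =
        fun _ => ∑ i ∈ s, (Fintype.card F : ℚ) ^ (i - 1) := by
    rw [sum_mulVec, Finset.sum_congr rfl fun i hi => TmatA_mulVec_one (hs i hi).1 (hs i hi).2]
    funext c
    exact Finset.sum_apply c _ _
  rw [FmatA, sub_mulVec, smul_mulVec, hrow fun i hi => by simp at hi; omega,
    hrow fun i hi => by simp at hi; omega]
  funext c
  simp [pow_mul_sum_Icc_pow_sub_one _ hj]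

theorem TmatA_apply_mul_TmatA_apply (h i : ℕ) (c : MaxFlagA F n) (X : PointA F n) :
    TmatA F n h c X * TmatA F n i c X = if h = i then TmatA F n h c X else 0 := by
  unfold TmatA
  split_ifs <;> simp_all

theorem TmatA_transpose_mul_FmatA_apply_self {h m j : ℕ} (hh : h ≤ m) (X : PointA F n) :
    ((TmatA F n h)ᵀ * FmatA F n m j) X X =
      (if m - j + 1 ≤ h then (Fintype.card F : ℚ) ^ j else 0) * ∑ c, TmatA F n h c X := by
  simp only [mul_apply, transpose_apply, FmatA, Matrix.sub_apply, Matrix.smul_apply,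
    Matrix.sum_apply, smul_eq_mul, mul_sub, Finset.mul_sum, mul_left_comm (TmatA F n h _ X),
    TmatA_apply_mul_TmatA_apply, mul_ite, mul_zero, Finset.sum_ite_eq, Finset.mem_Icc]
  refine Finset.sum_congr rfl fun c _ => ?_
  split_ifs <;> first | omega | ring

end Incidence

section GaussianNumbers

variable {Q : ℚ}

theorem geom_sum_eq_vA (hQ : Q ≠ 1) (k : ℕ) : ∑ i ∈ Finset.range (k + 1), Q ^ i = vA Q k :=
  geom_sum_eq hQ (k + 1)

theorem vA_pos (hQ : 1 < Q) (k : ℕ) : 0 < vA Q k :=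
  div_pos (sub_pos.mpr (one_lt_pow₀ hQ k.succ_ne_zero)) (sub_pos.mpr hQ)

theorem vA_succ_sub_one (hQ : Q ≠ 1) (k : ℕ) : vA Q (k + 1) - 1 = Q * vA Q k := by
  have : Q - 1 ≠ 0 := sub_ne_zero.mpr hQ
  unfold vA
  field_simp
  ring

theorem cA_succ (Q : ℚ) (k : ℕ) : cA Q (k + 1) = cA Q k * vA Q (k + 1) :=
  Finset.prod_Icc_succ_top (Nat.le_add_left 1 k) _

theorem prod_range_vA (hQ : Q ≠ 1) (k : ℕ) :
    ∏ i ∈ Finset.range (k + 1), vA Q i = cA Q k := by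
  induction k with
  | zero => simp [← geom_sum_eq_vA hQ, cA]
  | succ k ih => rw [Finset.prod_range_succ, ih, cA_succ]

end GaussianNumbers

section Homogeneity

variable {F : Type} [Field F] {n : ℕ}

theorem PointA.exists_map_eq_map_eq {X Y X' Y' : PointA F n} (hXY : X ≠ Y) (hXY' : X' ≠ Y') :
    ∃ g, X.map g = X' ∧ Y.map g = Y' := by
  obtain ⟨g, hX, hY⟩ := exists_linearEquiv_map_eq_map_eq X.2 Y.2 X'.2 Y'.2
    (Subtype.coe_injective.ne hXY) (Subtype.coe_injective.ne hXY')
  exact ⟨g, Subtype.ext hX, Subtype.ext hY⟩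

variable [Fintype F]

theorem natCard_pointA :
    Nat.card (PointA F n) = ∑ i ∈ Finset.range (n + 1), Fintype.card F ^ i :=
  natCard_finrank_eq_one (finrank_fin_fun F)

theorem natCard_maxFlagA :
    Nat.card (MaxFlagA F n) =
      ∏ k ∈ Finset.range (n + 1), ∑ i ∈ Finset.range (k + 1), Fintype.card F ^ i :=
  CompleteFlag.natCard_eq (finrank_fin_fun F)

theorem natCast_card_pointA : (Nat.card (PointA F n) : ℚ) = vA (Fintype.card F) n := by
  rw [natCard_pointA, ← geom_sum_eq_vA (Nat.one_lt_cast.mpr Fintype.one_lt_card).ne']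
  push_cast
  rfl

theorem natCast_card_maxFlagA : (Nat.card (MaxFlagA F n) : ℚ) = cA (Fintype.card F) n := by
  rw [natCard_maxFlagA]
  push_cast
  simp only [geom_sum_eq_vA (Nat.one_lt_cast.mpr Fintype.one_lt_card).ne',
    prod_range_vA (Nat.one_lt_cast.mpr Fintype.one_lt_card).ne']

theorem PointA.nontrivial (hn : 1 ≤ n) : Nontrivial (PointA F n) := by
  rw [← Finite.one_lt_card_iff_nontrivial, natCard_pointA]
  calc 1 < ∑ i ∈ Finset.range 2, Fintype.card F ^ i := by simp [Fintype.card_pos]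
    _ ≤ ∑ i ∈ Finset.range (n + 1), Fintype.card F ^ i :=
      Finset.sum_le_sum_of_subset (Finset.range_subset_range.mpr (by omega))

theorem PointA.exists_map_eq (hn : 1 ≤ n) (X X' : PointA F n) : ∃ g, X.map g = X' := by
  have := PointA.nontrivial (F := F) hn
  obtain ⟨Y, hY⟩ := exists_ne X
  obtain ⟨Y', hY'⟩ := exists_ne X'
  obtain ⟨g, hg, -⟩ := PointA.exists_map_eq_map_eq hY.symm hY'.symm
  exact ⟨g, hg⟩

theorem card_mul_sum_TmatA_apply (hn : 1 ≤ n) {h : ℕ} (hh1 : 1 ≤ h) (hh2 : h ≤ n + 1)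
    (X : PointA F n) :
    (Nat.card (PointA F n) : ℚ) * ∑ c, TmatA F n h c X =
      Nat.card (MaxFlagA F n) * (Fintype.card F : ℚ) ^ (h - 1) := by
  have hconst (X' : PointA F n) : ∑ c, TmatA F n h c X' = ∑ c, TmatA F n h c X := by
    obtain ⟨g, rfl⟩ := PointA.exists_map_eq hn X X'
    rw [← (MaxFlagA.mapEquiv g).sum_comp]
    exact Finset.sum_congr rfl fun c _ =>
      congrFun (congrFun (TmatA_submatrix_mapEquiv g h) c) X
  calc (Nat.card (PointA F n) : ℚ) * ∑ c, TmatA F n h c X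
      = ∑ X', ∑ c, TmatA F n h c X' := by
        simp [Finset.sum_congr rfl fun X' _ => hconst X', Nat.card_eq_fintype_card]
    _ = ∑ c, ∑ X', TmatA F n h c X' := Finset.sum_comm
    _ = ∑ _c : MaxFlagA F n, (Fintype.card F : ℚ) ^ (h - 1) :=
        Finset.sum_congr rfl fun c _ => by
          simpa [mulVec, dotProduct] using congrFun (TmatA_mulVec_one hh1 hh2) c
    _ = Nat.card (MaxFlagA F n) * (Fintype.card F : ℚ) ^ (h - 1) := by
        simp [Nat.card_eq_fintype_card]

end Homogeneity

open Classical in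
theorem card_mul_card_sub_one_smul_TmatA_transpose_mul_FmatA {F : Type} [Field F] [Fintype F]
    {n : ℕ} (hn : 1 ≤ n) {h m j : ℕ} (hh1 : 1 ≤ h) (hh : h ≤ m) (hj : j ≤ m)
    (hmj : m + j ≤ n + 1) :
    ((Nat.card (PointA F n) : ℚ) * (Nat.card (PointA F n) - 1)) •
        ((TmatA F n h)ᵀ * FmatA F n m j) =
      ((if m - j + 1 ≤ h then (Fintype.card F : ℚ) ^ j else 0) * Nat.card (MaxFlagA F n) *
          (Fintype.card F : ℚ) ^ (h - 1)) •
        ((Nat.card (PointA F n) : ℚ) • (1 : Matrix (PointA F n) (PointA F n) ℚ) -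
          of fun _ _ => 1) := by
  set M := (TmatA F n h)ᵀ * FmatA F n m j
  have hinv g (X Y : PointA F n) : M (X.map g) (Y.map g) = M X Y :=
    congrFun (congrFun (Matrix.transpose_mul_submatrix_eq_self _ _
      (TmatA_submatrix_mapEquiv g h) (FmatA_submatrix_mapEquiv g m j)) X) Y
  have hoff (X Y Y' : PointA F n) (hY : Y ≠ X) (hY' : Y' ≠ X) : M X Y = M X Y' := by
    obtain ⟨g, hgX, hgY⟩ := PointA.exists_map_eq_map_eq hY.symm hY'.symm
    rw [← hinv g, hgX, hgY]
  have hrow : M *ᵥ (fun _ => 1) = 0 := by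
    rw [← mulVec_mulVec, FmatA_mulVec_one hj hmj, mulVec_zero]
  have hP : (Nat.card (PointA F n) : ℚ) ≠ 0 := by
    have := PointA.nontrivial (F := F) hn
    exact Nat.cast_ne_zero.mpr Nat.card_pos.ne'
  have hdiag (X : PointA F n) : M X X =
      (if m - j + 1 ≤ h then (Fintype.card F : ℚ) ^ j else 0) * Nat.card (MaxFlagA F n) *
        (Fintype.card F : ℚ) ^ (h - 1) / Nat.card (PointA F n) := by
    rw [show M X X = _ from TmatA_transpose_mul_FmatA_apply_self hh X, eq_div_iff hP,
      mul_assoc, mul_assoc, ← card_mul_sum_TmatA_apply hn hh1 (by omega) X]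
    ring
  have key := Matrix.card_sub_one_smul_eq_of_mulVec_eq_zero hdiag hoff hrow
  rw [← Nat.card_eq_fintype_card] at key
  rw [mul_smul, key, smul_smul, mul_div_cancel₀ _ hP]

open Classical in
/-- (i) `T_hᵀ F_j = 0` for `h < m-j+1`; (ii) `T_(m-j+1)ᵀ F_j = c(n-2)·q^(m-1)·(v(n)·I - J)`. -/
theorem Tmat_transpose_mul_Fmat (F : Type) [Field F] [Fintype F] (q : ℕ)
    (hq : Fintype.card F = q) (m : ℕ) (hm : 2 ≤ m) (n : ℕ) (hn : n = 2 * m - 1)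
    (j : ℕ) (hj1 : 1 ≤ j) (hj2 : j ≤ m) :
    (∀ h : ℕ, 1 ≤ h → h ≤ n + 1 → h < m - j + 1 →
      (TmatA F n h)ᵀ * FmatA F n m j = 0) ∧
    (TmatA F n (m - j + 1))ᵀ * FmatA F n m j =
      (cA (q : ℚ) (n - 2) * (q : ℚ) ^ (m - 1)) •
        (vA (q : ℚ) n • (1 : Matrix (PointA F n) (PointA F n) ℚ) -
          Matrix.of (fun _ _ => (1 : ℚ))) := by
  obtain ⟨k, rfl⟩ : ∃ k, n = k + 2 := ⟨n - 2, by omega⟩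
  have hcard : (Fintype.card F : ℚ) = q := by exact_mod_cast hq
  have hQ : (1 : ℚ) < q := Nat.one_lt_cast.mpr (hq ▸ Fintype.one_lt_card)
  have key {h : ℕ} (hh1 : 1 ≤ h) (hh : h ≤ m) :=
    card_mul_card_sub_one_smul_TmatA_transpose_mul_FmatA (F := F) (n := k + 2) (by omega) hh1 hh
      hj2 (by omega)
  simp only [natCast_card_pointA, natCast_card_maxFlagA, hcard, cA_succ,
    vA_succ_sub_one hQ.ne'] at key
  have hc : vA (q : ℚ) (k + 2) * (q * vA q (k + 1)) ≠ 0 :=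
    mul_ne_zero (vA_pos hQ _).ne' (mul_ne_zero (by positivity) (vA_pos hQ _).ne')
  refine ⟨fun h hh1 _ hlt => ?_, ?_⟩
  · have hzero := key hh1 (by omega)
    rw [if_neg (by omega), zero_mul, zero_mul, zero_smul] at hzero
    exact (smul_eq_zero.mp hzero).resolve_left hc
  · refine smul_right_injective _ hc ?_
    beta_reduce
    rw [key (by omega) (by omega), if_pos le_rfl, smul_smul, Nat.add_sub_cancel (n := k),
      Nat.add_sub_cancel (n := m - j)]
    have hpow : (q : ℚ) ^ j * (q : ℚ) ^ (m - j) = q * (q : ℚ) ^ (m - 1) := by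
      rw [← pow_add, ← pow_succ']
      congr 1
      omega
    congr 1
    linear_combination cA (q : ℚ) k * vA (q : ℚ) (k + 1) * vA (q : ℚ) (k + 2) * hpow
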